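/- arXiv:0806.0490 — 5 statements merged into one kernel-verified Lean document; each statement's English description precedes it below -/
import Mathlib

section
/- Let F̄(x) = exp(−γ x^β) for x > 0, with γ > 0 and 0 < β < 1 (Weibull tail). Then for a nondecreasing function h with h(x) → ∞ and h(x) < x/2, F̄(x − h(x)) ∼ F̄(x) holds if and only if h(x) = o(x^{1−β}). -/
/-!
Writing `F̄(x - h) / F̄(x) = exp (γ (x^β - (x - h)^β))`, the claim is that the exponent tends
to `0` iff `h / x^(1-β)` does. By concavity of `t ↦ t^β`, the exponent lies between `h` times
the derivative of `t^β` at `x` and `h` times that at `x - h`, and since `x / 2 < x - h < x` these two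
derivatives agree up to the factor `2^(1-β)`. So the exponent is `Θ(h / x^(1-β))`.
-/

open Filter Topology Asymptotics

lemma Real.rpow_le_rpow_add_mul_sub {a b β : ℝ} (ha : 0 < a) (hb : 0 ≤ b) (hβ0 : 0 ≤ β)
    (hβ1 : β ≤ 1) : b ^ β ≤ a ^ β + β * a ^ (β - 1) * (b - a) := by
  have hb' : b = a * (1 + (b / a - 1)) := by field_simp; ring
  have hbernoulli : (1 + (b / a - 1)) ^ β ≤ 1 + β * (b / a - 1) :=
    rpow_one_add_le_one_add_mul_self (by linarith [div_nonneg hb ha.le]) hβ0 hβ1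
  calc b ^ β = a ^ β * (1 + (b / a - 1)) ^ β := by
        conv_lhs => rw [hb']
        exact Real.mul_rpow ha.le (by linarith [div_nonneg hb ha.le])
    _ ≤ a ^ β * (1 + β * (b / a - 1)) := by gcongr
    _ = a ^ β + β * a ^ (β - 1) * (b - a) := by
        rw [Real.rpow_sub ha, Real.rpow_one]; field_simp

lemma rpow_sub_rpow_sub_bounds {β x t : ℝ} (hβ0 : 0 ≤ β) (hβ1 : β ≤ 1) (hx : 0 < x)
    (ht : 0 ≤ t) (htx : t ≤ x / 2) :
    β * (t / x ^ (1 - β)) ≤ x ^ β - (x - t) ^ β ∧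
      x ^ β - (x - t) ^ β ≤ β * 2 ^ (1 - β) * (t / x ^ (1 - β)) := by
  have hxt : 0 < x - t := by linarith
  have hinv : ∀ y : ℝ, 0 < y → y ^ (β - 1) = 1 / y ^ (1 - β) := fun y hy => by
    rw [show β - 1 = -(1 - β) by ring, Real.rpow_neg hy.le, one_div]
  have hderiv : (x - t) ^ (β - 1) ≤ 2 ^ (1 - β) / x ^ (1 - β) :=
    calc (x - t) ^ (β - 1) ≤ (x / 2) ^ (β - 1) :=
          Real.rpow_le_rpow_of_nonpos (by positivity) (by linarith) (by linarith)
      _ = 2 ^ (1 - β) / x ^ (1 - β) := by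
          rw [hinv _ (by positivity), Real.div_rpow hx.le zero_le_two]; field_simp
  constructor
  · have := Real.rpow_le_rpow_add_mul_sub hx hxt.le hβ0 hβ1
    rw [hinv x hx] at this
    linarith [show β * (1 / x ^ (1 - β)) * (x - t - x) = -(β * (t / x ^ (1 - β))) by ring]
  · have := Real.rpow_le_rpow_add_mul_sub hxt hx.le hβ0 hβ1
    have hmul : β * (x - t) ^ (β - 1) * t ≤ β * (2 ^ (1 - β) / x ^ (1 - β)) * t := by gcongr
    linarith [show β * (2 ^ (1 - β) / x ^ (1 - β)) * t = β * 2 ^ (1 - β) * (t / x ^ (1 - β)) by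
      ring, show x - (x - t) = t by ring]

lemma isTheta_rpow_sub_rpow_sub {β : ℝ} (hβ0 : 0 < β) (hβ1 : β ≤ 1) {h : ℝ → ℝ}
    (hh : ∀ᶠ x in atTop, 0 ≤ h x ∧ h x ≤ x / 2) :
    (fun x => x ^ β - (x - h x) ^ β) =Θ[atTop] fun x => h x / x ^ (1 - β) := by
  have hbounds : ∀ᶠ x in atTop, 0 ≤ h x / x ^ (1 - β) ∧
      β * (h x / x ^ (1 - β)) ≤ x ^ β - (x - h x) ^ β ∧
      x ^ β - (x - h x) ^ β ≤ β * 2 ^ (1 - β) * (h x / x ^ (1 - β)) := by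
    filter_upwards [hh, eventually_gt_atTop 0] with x ⟨hh0, hhx⟩ hx
    exact ⟨by positivity, rpow_sub_rpow_sub_bounds hβ0.le hβ1 hx hh0 hhx⟩
  constructor
  · refine IsBigO.of_bound (β * 2 ^ (1 - β)) ?_
    filter_upwards [hbounds] with x ⟨hg, hlo, hup⟩
    have : 0 ≤ β * (h x / x ^ (1 - β)) := by positivity
    rw [Real.norm_of_nonneg (by linarith), Real.norm_of_nonneg hg]
    exact hup
  · refine IsBigO.of_bound β⁻¹ ?_
    filter_upwards [hbounds] with x ⟨hg, hlo, hup⟩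
    have : 0 ≤ β * (h x / x ^ (1 - β)) := by positivity
    rw [Real.norm_of_nonneg hg, Real.norm_of_nonneg (by linarith), inv_mul_eq_div,
      le_div_iff₀ hβ0, mul_comm]
    exact hlo

lemma Real.tendsto_exp_comp_nhds_one_iff {α : Type*} {l : Filter α} {f : α → ℝ} :
    Tendsto (fun x => Real.exp (f x)) l (𝓝 1) ↔ Tendsto f l (𝓝 0) := by
  refine ⟨fun H => ?_, fun H => Real.tendsto_exp_nhds_zero_nhds_one.comp H⟩
  simpa only [Function.comp_def, Real.log_exp, Real.log_one] using
    (Real.continuousAt_log one_ne_zero).tendsto.comp H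

theorem weibull_boundary_class_general
    (γ β : ℝ) (hγ : 0 < γ) (hβ0 : 0 < β) (hβ1 : β < 1)
    (h : ℝ → ℝ)
    (hh_lt : ∀ x : ℝ, 0 < x → 0 < h x ∧ h x < x / 2) :
    Tendsto
      (fun x => Real.exp (-γ * (x - h x) ^ β) / Real.exp (-γ * x ^ β))
      atTop (nhds 1) ↔
    Tendsto (fun x => h x / x ^ (1 - β)) atTop (nhds 0) := by
  have hratio : (fun x => Real.exp (-γ * (x - h x) ^ β) / Real.exp (-γ * x ^ β)) =
      fun x => Real.exp (γ * (x ^ β - (x - h x) ^ β)) := by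
    funext x
    rw [← Real.exp_sub]
    ring_nf
  have hh : ∀ᶠ x in atTop, 0 ≤ h x ∧ h x ≤ x / 2 := by
    filter_upwards [eventually_gt_atTop 0] with x hx
    exact ⟨(hh_lt x hx).1.le, (hh_lt x hx).2.le⟩
  rw [hratio, Real.tendsto_exp_comp_nhds_one_iff]
  exact ((isTheta_const_mul_left hγ.ne').2
    (isTheta_rpow_sub_rpow_sub hβ0 hβ1.le hh)).tendsto_zero_iff

/-- Weibull tail `F̄(x) = exp(−γ x^β)`, `0 < β < 1`, `γ > 0`:
for nondecreasing `h` with `h → ∞` and `h(x) < x/2`,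
`F̄(x − h(x)) ∼ F̄(x)` iff `h(x) = o(x^{1−β})`. -/
theorem weibull_boundary_class
    (γ β : ℝ) (hγ : 0 < γ) (hβ0 : 0 < β) (hβ1 : β < 1)
    (h : ℝ → ℝ) (hh_mono : Monotone h)
    (hh_tendsto : Tendsto h atTop atTop)
    (hh_lt : ∀ x : ℝ, 0 < x → 0 < h x ∧ h x < x / 2) :
    Tendsto
      (fun x => Real.exp (-γ * (x - h x) ^ β) / Real.exp (-γ * x ^ β))
      atTop (nhds 1) ↔
    Tendsto (fun x => h x / x ^ (1 - β)) atTop (nhds 0) :=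
  weibull_boundary_class_general γ β hγ hβ0 hβ1 h hh_lt
end

section
/- For 0 < a < b and γ > 0, let F̄_X(x) = (1/((b−a) log x)) · (E₁(γx^a) − E₁(γx^b)) for x > 1, where E₁(z) = ∫_z^∞ e^{−u}/u du. If 0 < a < 1, then F̄_X(x) ∼ exp(−γ x^a) / ((b−a) γ x^a log x) as x → ∞. -/
/-!
Pulling out `(b − a) log x`, the ratio equals `(E₁(A) − E₁(B)) · A e^A` with `A = γx^a`,
`B = γx^b`. Integrating `e^{-u}` against `1/u` and against its tangent line at `u = z + 1`
gives `e^{-z}/(z+1) ≤ E₁(z) ≤ e^{-z}/z`, so `E₁(A) · A e^A → 1`, while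
`E₁(B) · A e^A ≤ A/B = x^{a−b} → 0`.
-/

open MeasureTheory Filter

/-- The exponential integral `E₁(z) = ∫_z^∞ e^{−u}/u du`. -/
noncomputable def expIntegralE1 (z : ℝ) : ℝ := ∫ u in Set.Ioi z, Real.exp (-u) / u

open Topology Real Set

lemma integrableOn_exp_neg_div_Ioi {z : ℝ} (hz : 0 < z) :
    IntegrableOn (fun u => exp (-u) / u) (Ioi z) := by
  refine Integrable.mono' ((integrableOn_exp_neg_Ioi z).div_const z)
    ((measurable_exp.comp measurable_neg).div measurable_id).aestronglyMeasurable ?_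
  filter_upwards [ae_restrict_mem measurableSet_Ioi] with u (hu : z < u)
  rw [norm_div, norm_of_nonneg (exp_pos _).le, norm_of_nonneg (hz.trans hu).le]
  gcongr

lemma integrableOn_mul_exp_neg_Ioi {z : ℝ} (hz : 0 < z) :
    IntegrableOn (fun u => u * exp (-u)) (Ioi z) := by
  refine ((GammaIntegral_convergent (s := 2) two_pos).mono_set
    (Ioi_subset_Ioi hz.le)).congr_fun (fun u _ => ?_) measurableSet_Ioi
  norm_num [mul_comm]

lemma integral_mul_exp_neg_Ioi {z : ℝ} (hz : 0 < z) :
    ∫ u in Ioi z, u * exp (-u) = (z + 1) * exp (-z) := by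
  have hderiv (u : ℝ) : HasDerivAt (fun u => -(u + 1) * exp (-u)) (u * exp (-u)) u := by
    have hlin : HasDerivAt (fun u : ℝ => -(u + 1)) (-1) u := ((hasDerivAt_id u).add_const 1).neg
    exact (hlin.mul (hasDerivAt_neg u).exp).congr_deriv (by ring)
  have hlim : Tendsto (fun u => -(u + 1) * exp (-u)) atTop (𝓝 0) := by
    have := ((tendsto_pow_mul_exp_neg_atTop_nhds_zero 1).add
      tendsto_exp_neg_atTop_nhds_zero).neg
    simpa [add_mul] using this
  rw [integral_Ioi_of_hasDerivAt_of_tendsto' (fun u _ => hderiv u)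
    (integrableOn_mul_exp_neg_Ioi hz) hlim]
  ring

lemma expIntegralE1_le {z : ℝ} (hz : 0 < z) : expIntegralE1 z ≤ exp (-z) / z := by
  calc expIntegralE1 z ≤ ∫ u in Ioi z, exp (-u) / z := by
        refine setIntegral_mono_on (integrableOn_exp_neg_div_Ioi hz)
          ((integrableOn_exp_neg_Ioi z).div_const z) measurableSet_Ioi fun u (hu : z < u) => ?_
        gcongr
    _ = exp (-z) / z := by rw [integral_div, integral_exp_neg_Ioi]

lemma exp_neg_div_add_one_le_expIntegralE1 {z : ℝ} (hz : 0 < z) :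
    exp (-z) / (z + 1) ≤ expIntegralE1 z := by
  have hint : IntegrableOn (fun u => (2 * (z + 1) * exp (-u) - u * exp (-u)) / (z + 1) ^ 2)
      (Ioi z) :=
    (((integrableOn_exp_neg_Ioi z).const_mul _).sub (integrableOn_mul_exp_neg_Ioi hz)).div_const _
  calc exp (-z) / (z + 1)
      = ∫ u in Ioi z, (2 * (z + 1) * exp (-u) - u * exp (-u)) / (z + 1) ^ 2 := by
        rw [integral_div, integral_sub ((integrableOn_exp_neg_Ioi z).const_mul _)
          (integrableOn_mul_exp_neg_Ioi hz), integral_const_mul, integral_exp_neg_Ioi,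
          integral_mul_exp_neg_Ioi hz]
        field_simp
        ring
    _ ≤ expIntegralE1 z := by
        refine setIntegral_mono_on hint (integrableOn_exp_neg_div_Ioi hz) measurableSet_Ioi
          fun u (hu : z < u) => ?_
        have hu0 : 0 < u := hz.trans hu
        -- `1/u` lies above its tangent line `(2c - u)/c²` at `c = z + 1`
        have htangent : (2 * (z + 1) - u) * u ≤ (z + 1) ^ 2 := by
          nlinarith [sq_nonneg (u - (z + 1))]
        rw [div_le_div_iff₀ (by positivity) hu0, ← sub_mul, mul_right_comm, mul_comm (exp _)]
        exact mul_le_mul_of_nonneg_right htangent (exp_pos _).le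

lemma expIntegralE1_nonneg {z : ℝ} (hz : 0 < z) : 0 ≤ expIntegralE1 z :=
  (div_nonneg (exp_pos _).le (by linarith)).trans (exp_neg_div_add_one_le_expIntegralE1 hz)

lemma tendsto_expIntegralE1_mul_mul_exp :
    Tendsto (fun z => expIntegralE1 z * (z * exp z)) atTop (𝓝 1) := by
  have hlower : Tendsto (fun z : ℝ => 1 - (z + 1)⁻¹) atTop (𝓝 1) := by
    simpa using ((tendsto_inv_atTop_zero (𝕜 := ℝ)).comp
      (tendsto_atTop_add_const_right _ 1 tendsto_id)).const_sub 1
  refine tendsto_of_tendsto_of_tendsto_of_le_of_le' hlower tendsto_const_nhds ?_ ?_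
  · filter_upwards [eventually_gt_atTop 0] with z hz
    calc 1 - (z + 1)⁻¹ = exp (-z) / (z + 1) * (z * exp z) := by
          rw [exp_neg]
          field_simp
          ring
      _ ≤ expIntegralE1 z * (z * exp z) := by
          gcongr
          exact exp_neg_div_add_one_le_expIntegralE1 hz
  · filter_upwards [eventually_gt_atTop 0] with z hz
    calc expIntegralE1 z * (z * exp z) ≤ exp (-z) / z * (z * exp z) := by
          gcongr
          exact expIntegralE1_le hz
      _ = 1 := by
          rw [exp_neg]
          field_simp

lemma expIntegralE1_mul_mul_exp_le_div {z w : ℝ} (hz : 0 < z) (hzw : z ≤ w) :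
    expIntegralE1 w * (z * exp z) ≤ z / w := by
  have hw : 0 < w := hz.trans_le hzw
  calc expIntegralE1 w * (z * exp z) ≤ exp (-w) / w * (z * exp z) := by
        gcongr
        exact expIntegralE1_le hw
    _ = z / w * exp (z - w) := by
        rw [exp_sub, exp_neg]
        field_simp
    _ ≤ z / w := mul_le_of_le_one_right (by positivity) (exp_le_one_iff.mpr (by linarith))

lemma tendsto_expIntegralE1_sub_mul_mul_exp {α : Type*} {l : Filter α} {f g : α → ℝ}
    (hf : Tendsto f l atTop) (hfg : ∀ᶠ x in l, f x ≤ g x)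
    (hdiv : Tendsto (fun x => f x / g x) l (𝓝 0)) :
    Tendsto (fun x => (expIntegralE1 (f x) - expIntegralE1 (g x)) * (f x * exp (f x)))
      l (𝓝 1) := by
  have hsmall : Tendsto (fun x => expIntegralE1 (g x) * (f x * exp (f x))) l (𝓝 0) := by
    refine tendsto_of_tendsto_of_tendsto_of_le_of_le' tendsto_const_nhds hdiv ?_ ?_
    · filter_upwards [hf.eventually_gt_atTop 0, hfg] with x hx hxy
      have := expIntegralE1_nonneg (hx.trans_le hxy)
      positivity
    · filter_upwards [hf.eventually_gt_atTop 0, hfg] with x hx hxy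
      exact expIntegralE1_mul_mul_exp_le_div hx hxy
  simpa [sub_mul] using (tendsto_expIntegralE1_mul_mul_exp.comp hf).sub hsmall

theorem weibull_mixture_tail_asymptotics_general
    (a b γ : ℝ) (ha : 0 < a) (hab : a < b) (hγ : 0 < γ) :
    Tendsto
      (fun x : ℝ =>
        ((expIntegralE1 (γ * x ^ a) - expIntegralE1 (γ * x ^ b))
            / ((b - a) * Real.log x)) /
          (Real.exp (-γ * x ^ a) / ((b - a) * γ * x ^ a * Real.log x)))
      atTop (nhds 1) := by
  have hA : Tendsto (fun x : ℝ => γ * x ^ a) atTop atTop :=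
    (tendsto_rpow_atTop ha).const_mul_atTop hγ
  have hAB : ∀ᶠ x : ℝ in atTop, γ * x ^ a ≤ γ * x ^ b := by
    filter_upwards [eventually_ge_atTop 1] with x hx
    gcongr
  have hdiv : Tendsto (fun x : ℝ => γ * x ^ a / (γ * x ^ b)) atTop (𝓝 0) := by
    refine (tendsto_rpow_neg_atTop (sub_pos.mpr hab)).congr' ?_
    filter_upwards [eventually_gt_atTop 0] with x hx
    rw [mul_div_mul_left _ _ hγ.ne', ← rpow_sub hx, neg_sub]
  refine (tendsto_expIntegralE1_sub_mul_mul_exp hA hAB hdiv).congr' ?_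
  filter_upwards [eventually_gt_atTop 1] with x hx
  have hlog : log x ≠ 0 := (log_pos hx).ne'
  have hba : b - a ≠ 0 := (sub_pos.mpr hab).ne'
  have hxa : x ^ a ≠ 0 := (rpow_pos_of_pos (zero_lt_one.trans hx) a).ne'
  rw [neg_mul, exp_neg]
  field_simp

/-- For `0 < a < b`, `γ > 0` and `a < 1`, the tail
`F̄_X(x) = (E₁(γx^a) − E₁(γx^b)) / ((b−a) log x)` satisfies
`F̄_X(x) ∼ exp(−γ x^a) / ((b−a) γ x^a log x)` as `x → ∞`. -/
theorem weibull_mixture_tail_asymptotics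
    (a b γ : ℝ) (ha : 0 < a) (hab : a < b) (hγ : 0 < γ) (ha1 : a < 1) :
    Tendsto
      (fun x : ℝ =>
        ((expIntegralE1 (γ * x ^ a) - expIntegralE1 (γ * x ^ b))
            / ((b - a) * Real.log x)) /
          (Real.exp (-γ * x ^ a) / ((b - a) * γ * x ^ a * Real.log x)))
      atTop (nhds 1) :=
  weibull_mixture_tail_asymptotics_general a b γ ha hab hγ
end

section
/- Let X₁, X₂ be conditionally i.i.d. given β ∼ Uniform(0,1), with conditional tail P(Xᵢ > x | β) = exp(−x^β) for x > 0. Then P(X₁ > x, X₂ > x) ∼ (E₁(2)/E₁(1)) · P(X₁ > x) as x → ∞, where E₁(z) = ∫_z^∞ e^{−u}/u du. In particular the ratio P(X₁ > x, X₂ > x)/P(X₁ > x) converges to a strictly positive constant, so the principle of the single big jump fails. -/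
open MeasureTheory Filter

lemma integrableE1 (z : ℝ) (hz : 0 < z) :
    MeasureTheory.IntegrableOn (fun u => Real.exp (-u) / u) (Set.Ioi z) := by
  have h1 : MeasureTheory.IntegrableOn (fun u : ℝ => Real.exp (-u) / z) (Set.Ioi z) := by
    have := (exp_neg_integrableOn_Ioi z (by norm_num : (0:ℝ) < 1))
    simp only [neg_mul, one_mul] at this
    exact this.div_const z
  refine Integrable.mono' h1 ?_ ?_
  · exact (Measurable.div (Real.measurable_exp.comp measurable_neg)
      measurable_id).aestronglyMeasurable
  · filter_upwards [ae_restrict_mem measurableSet_Ioi] with u hu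
    rw [Real.norm_eq_abs, abs_div, abs_of_pos (Real.exp_pos _), abs_of_pos (hz.trans hu)]
    exact div_le_div_of_nonneg_left (Real.exp_pos _).le hz (le_of_lt hu)

lemma E1_pos (z : ℝ) (hz : 0 < z) : 0 < expIntegralE1 z := by
  rw [expIntegralE1]
  rw [setIntegral_pos_iff_support_of_nonneg_ae]
  · have hsub : Set.Ioi z ⊆ Function.support (fun u => Real.exp (-u) / u) ∩ Set.Ioi z := by
      intro u hu
      refine ⟨?_, hu⟩
      exact ne_of_gt (div_pos (Real.exp_pos _) (hz.trans hu))
    calc (0:ENNReal) < volume (Set.Ioi z) := by simp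
      _ ≤ volume (Function.support (fun u => Real.exp (-u) / u) ∩ Set.Ioi z) :=
        measure_mono hsub
  · filter_upwards [ae_restrict_mem measurableSet_Ioi] with u hu
    exact le_of_lt (div_pos (Real.exp_pos _) (hz.trans hu))
  · exact integrableE1 z hz

lemma sub_key {c x : ℝ} (hc : 0 < c) (hx : 1 < x) :
    ∫ β in Set.Ioo (0:ℝ) 1, Real.exp (-(c * x ^ β)) =
      (Real.log x)⁻¹ * ∫ u in c..(c*x), Real.exp (-u) / u := by
  have hx0 : 0 < x := lt_trans one_pos hx
  have hlog : 0 < Real.log x := Real.log_pos hx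
  set f : ℝ → ℝ := fun β => c * x ^ β with hf
  set f' : ℝ → ℝ := fun β => c * (x ^ β * Real.log x) with hf'
  have hderiv : ∀ β : ℝ, HasDerivAt f (f' β) β := fun β =>
    ((Real.hasStrictDerivAt_const_rpow hx0 β).hasDerivAt).const_mul c
  have hcontf : Continuous f := by
    rw [continuous_iff_continuousAt]; exact fun β => (hderiv β).continuousAt
  have hcontf' : Continuous f' := by
    have : f' = fun β => f β * Real.log x := by funext β; simp only [hf, hf']; ring
    rw [this]; exact hcontf.mul continuous_const
  have himg : ∀ β : ℝ, 0 < f β := fun β => mul_pos hc (Real.rpow_pos_of_pos hx0 β)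
  have hg : ContinuousOn (fun u => Real.exp (-u) / u) (f '' Set.uIcc (0:ℝ) 1) := by
    apply ContinuousOn.div
    · exact (Real.continuous_exp.comp continuous_neg).continuousOn
    · exact continuousOn_id
    · rintro u ⟨β, _, rfl⟩
      exact (himg β).ne'
  have hsub := intervalIntegral.integral_comp_mul_deriv'' (a := (0:ℝ)) (b := 1)
      hcontf.continuousOn (fun β hβ => (hderiv β).hasDerivWithinAt)
      hcontf'.continuousOn hg
  have heq : ∀ β : ℝ, ((fun u => Real.exp (-u) / u) ∘ f) β * f' β
      = Real.exp (-(c * x ^ β)) * Real.log x := by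
    intro β
    have h0 : f β ≠ 0 := (himg β).ne'
    simp only [Function.comp, hf, hf'] at h0 ⊢
    field_simp
  simp only [heq] at hsub
  rw [intervalIntegral.integral_mul_const] at hsub
  have hf0 : f 0 = c := by simp [hf]
  have hf1 : f 1 = c * x := by simp [hf, Real.rpow_one]
  rw [hf0, hf1] at hsub
  rw [intervalIntegral.integral_of_le zero_le_one,
    MeasureTheory.integral_Ioc_eq_integral_Ioo] at hsub
  rw [← hsub, mul_comm _ (Real.log x), inv_mul_cancel_left₀ hlog.ne']

lemma tendsto_key (c : ℝ) (hc : 0 < c) :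
    Tendsto (fun x : ℝ => ∫ u in c..(c*x), Real.exp (-u) / u) atTop
      (nhds (expIntegralE1 c)) := by
  have h := MeasureTheory.intervalIntegral_tendsto_integral_Ioi (μ := volume)
    (f := fun u => Real.exp (-u) / u) c (integrableE1 c hc)
    (tendsto_const_nhds.pos_mul_atTop hc tendsto_id :
      Tendsto (fun x : ℝ => c * x) atTop atTop)
  exact h

/-- For `β ∼ Uniform(0,1)` and, conditionally on `β`, i.i.d. `X₁, X₂`
with `P(Xᵢ > x | β) = exp(−x^β)`, one has
`P(X₁ > x, X₂ > x) = ∫₀¹ exp(−2x^β) dβ`, `P(X₁ > x) = ∫₀¹ exp(−x^β) dβ`, and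
`P(X₁ > x, X₂ > x) / P(X₁ > x) → E₁(2)/E₁(1) > 0`:
the principle of the single big jump fails. -/
theorem single_big_jump_fails_weibull_mixture :
    Tendsto
      (fun x : ℝ =>
        (∫ β in Set.Ioo (0 : ℝ) 1, Real.exp (-2 * x ^ β)) /
          (∫ β in Set.Ioo (0 : ℝ) 1, Real.exp (-(x ^ β))))
      atTop (nhds (expIntegralE1 2 / expIntegralE1 1)) ∧
    0 < expIntegralE1 2 / expIntegralE1 1 := by
  have h1 := E1_pos 1 one_pos
  have h2 := E1_pos 2 two_pos
  constructor
  · have hratio : Tendsto (fun x : ℝ =>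
        (∫ u in (2:ℝ)..(2*x), Real.exp (-u) / u) /
          (∫ u in (1:ℝ)..(1*x), Real.exp (-u) / u)) atTop
        (nhds (expIntegralE1 2 / expIntegralE1 1)) :=
      (tendsto_key 2 two_pos).div (tendsto_key 1 one_pos) h1.ne'
    refine hratio.congr' ?_
    filter_upwards [eventually_gt_atTop (1:ℝ)] with x hx
    have hlog : 0 < Real.log x := Real.log_pos hx
    have e2 : ∫ β in Set.Ioo (0:ℝ) 1, Real.exp (-2 * x ^ β) =
        (Real.log x)⁻¹ * ∫ u in (2:ℝ)..(2*x), Real.exp (-u) / u := by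
      have := sub_key (c := 2) (x := x) two_pos hx
      simpa only [neg_mul] using this
    have e1 : ∫ β in Set.Ioo (0:ℝ) 1, Real.exp (-(x ^ β)) =
        (Real.log x)⁻¹ * ∫ u in (1:ℝ)..(1*x), Real.exp (-u) / u := by
      have := sub_key (c := 1) (x := x) one_pos hx
      simpa only [one_mul] using this
    rw [e2, e1, mul_div_mul_left _ _ (inv_ne_zero hlog.ne')]
  · exact div_pos h2 h1
end

section
/- Let β ∼ Uniform(0,1) and, conditionally on β, let X₁, X₂ be i.i.d. with P(Xᵢ > x | β) = exp(−x^β), x > 0. Then P(X₁ ≤ x, X₂ ≤ x, X₁ + X₂ > x) = o(1/log x) as x → ∞; that is, the probability that both summands are at most x but their sum exceeds x is negligible relative to P(X₁ > x) ∼ E₁(1)/log x. -/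
/-!
Given `β`, the integrand is the product density `f_β(u) f_β(v)` of two Weibull variables, so
integrating out `v` leaves `∫₀ˣ f_β(u) (S(x - u) - S(x)) du` with survival function
`S(a) = exp (-a ^ β)`. One of the two summands must exceed `x / 2`, which bounds this by
`2 (S(x / 2) - S(x))`, and Bernoulli's `2 ^ β ≤ 1 + β` together with `t² e⁻ᵗ ≤ 2` bounds that by
`4 β (x / 2) ^ (-β)`. The factor `β` is what matters: integrating over `β > 0` gives
`4 / log (x / 2) ^ 2 = o(1 / log x)`.
-/

open MeasureTheory Filter Real Set

noncomputable def weibullPDF (β u : ℝ) : ℝ := β * u ^ (β - 1) * exp (-u ^ β)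

lemma weibullPDF_nonneg {β u : ℝ} (hβ : 0 ≤ β) (hu : 0 ≤ u) : 0 ≤ weibullPDF β u := by
  unfold weibullPDF; have := rpow_nonneg hu (β - 1); positivity

lemma weibullPDF_mul_weibullPDF (β u v : ℝ) :
    weibullPDF β u * weibullPDF β v
      = β ^ 2 * u ^ (β - 1) * v ^ (β - 1) * exp (-(u ^ β + v ^ β)) := by
  rw [weibullPDF, weibullPDF, neg_add, exp_add]; ring

lemma intervalIntegrable_weibullPDF {β : ℝ} (hβ : 0 < β) (a b : ℝ) :
    IntervalIntegrable (weibullPDF β) volume a b :=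
  ((intervalIntegral.intervalIntegrable_rpow' (by linarith)).const_mul β).mul_continuousOn
    (continuous_exp.comp (continuous_rpow_const hβ.le).neg).continuousOn

lemma integral_weibullPDF {β a b : ℝ} (hβ : 0 < β) (ha : 0 ≤ a) (hab : a ≤ b) :
    ∫ u in a..b, weibullPDF β u = exp (-a ^ β) - exp (-b ^ β) := by
  have hderiv : ∀ u ∈ Ioo a b, HasDerivAt (fun u => -exp (-u ^ β)) (weibullPDF β u) u := by
    intro u hu
    have h : HasDerivAt (fun u => -exp (-u ^ β)) (-(exp (-u ^ β) * -(β * u ^ (β - 1)))) u :=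
      (hasDerivAt_rpow_const (Or.inl (ha.trans_lt hu.1).ne')).neg.exp.neg
    convert h using 1
    simp only [weibullPDF]; ring
  rw [intervalIntegral.integral_eq_sub_of_hasDerivAt_of_le hab
    (continuous_exp.comp (continuous_rpow_const hβ.le).neg).neg.continuousOn hderiv
    (intervalIntegrable_weibullPDF hβ a b)]
  simp only [Function.comp_apply, Pi.neg_apply]; ring

lemma exp_neg_rpow_antitoneOn {β : ℝ} (hβ : 0 ≤ β) :
    AntitoneOn (fun a : ℝ => exp (-a ^ β)) (Ici 0) := fun a ha b _ hab => by
  simp only [exp_le_exp, neg_le_neg_iff]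
  exact rpow_le_rpow ha hab hβ

lemma integral_weibullPDF_mul_sub_le {β x : ℝ} (hβ : 0 < β) (hx : 0 ≤ x) :
    ∫ u in 0..x, weibullPDF β u * (exp (-(x - u) ^ β) - exp (-x ^ β))
      ≤ 2 * (exp (-(x / 2) ^ β) - exp (-x ^ β)) := by
  set D := exp (-(x / 2) ^ β) - exp (-x ^ β)
  have hD : 0 ≤ D := sub_nonneg.2 (exp_neg_rpow_antitoneOn hβ.le (mem_Ici.2 (by linarith))
    (mem_Ici.2 hx) (by linarith))
  have hint : ∀ a b, IntervalIntegrable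
      (fun u => weibullPDF β u * (exp (-(x - u) ^ β) - exp (-x ^ β))) volume a b := fun a b =>
    (intervalIntegrable_weibullPDF hβ a b).mul_continuousOn (Continuous.continuousOn
      (by have := continuous_rpow_const hβ.le; fun_prop))
  have hfirst : ∀ u ∈ Icc 0 (x / 2),
      weibullPDF β u * (exp (-(x - u) ^ β) - exp (-x ^ β)) ≤ D * weibullPDF β u := by
    intro u hu
    rw [mul_comm D]
    refine mul_le_mul_of_nonneg_left ?_ (weibullPDF_nonneg hβ.le hu.1)
    have := exp_neg_rpow_antitoneOn hβ.le (show 0 ≤ x / 2 by linarith)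
      (show 0 ≤ x - u by linarith [hu.2]) (by linarith [hu.2])
    linarith
  have hsecond : ∀ u ∈ Icc (x / 2) x,
      weibullPDF β u * (exp (-(x - u) ^ β) - exp (-x ^ β)) ≤ weibullPDF β u := by
    intro u hu
    refine mul_le_of_le_one_right (weibullPDF_nonneg hβ.le (by linarith [hu.1])) ?_
    have : exp (-(x - u) ^ β) ≤ 1 :=
      exp_le_one_iff.2 (neg_nonpos.2 (rpow_nonneg (by linarith [hu.2]) β))
    linarith [exp_pos (-x ^ β)]
  rw [← intervalIntegral.integral_add_adjacent_intervals (hint 0 (x / 2)) (hint (x / 2) x)]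
  calc _ ≤ (∫ u in 0..x / 2, D * weibullPDF β u) + ∫ u in x / 2..x, weibullPDF β u :=
        add_le_add
          (intervalIntegral.integral_mono_on (by linarith) (hint _ _)
            ((intervalIntegrable_weibullPDF hβ _ _).const_mul D) hfirst)
          (intervalIntegral.integral_mono_on (by linarith) (hint _ _)
            (intervalIntegrable_weibullPDF hβ _ _) hsecond)
    _ = D * (1 - exp (-(x / 2) ^ β)) + D := by
        rw [intervalIntegral.integral_const_mul, integral_weibullPDF hβ le_rfl (by linarith),
          integral_weibullPDF hβ (by linarith) (by linarith), zero_rpow hβ.ne', neg_zero,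
          exp_zero]
    _ ≤ 2 * D := by nlinarith [exp_pos (-(x / 2) ^ β)]

lemma exp_neg_rpow_sub_exp_neg_rpow_two_mul_le {β y : ℝ} (hβ₀ : 0 ≤ β) (hβ₁ : β ≤ 1)
    (hy : 0 < y) : exp (-y ^ β) - exp (-(2 * y) ^ β) ≤ 2 * β / y ^ β := by
  set t := y ^ β
  have ht : 0 < t := rpow_pos_of_pos hy β
  have htwo : (2 : ℝ) ^ β ≤ 1 + β := by
    simpa [one_add_one_eq_two] using rpow_one_add_le_one_add_mul_self (s := 1) (by norm_num) hβ₀ hβ₁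
  have hgap : exp (-t) - exp (-(2 * y) ^ β) ≤ β * t * exp (-t) := by
    have hs := add_one_le_exp (-((2 : ℝ) ^ β - 1) * t)
    have h2y : (2 * y) ^ β = 2 ^ β * t := mul_rpow (by norm_num) hy.le
    have hsplit : exp (-(2 * y) ^ β) = exp (-t) * exp (-((2 : ℝ) ^ β - 1) * t) := by
      rw [h2y, ← exp_add]; ring_nf
    rw [hsplit]
    have hE : 1 - exp (-((2 : ℝ) ^ β - 1) * t) ≤ β * t := by nlinarith
    nlinarith [mul_le_mul_of_nonneg_left hE (exp_pos (-t)).le]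
  have hquad : t ^ 2 * exp (-t) ≤ 2 := by
    have := quadratic_le_exp_of_nonneg ht.le
    rw [exp_neg, ← div_eq_mul_inv, div_le_iff₀ (exp_pos t)]
    nlinarith
  rw [le_div_iff₀ ht]
  nlinarith

/-- `P(X₁ ≤ x, X₂ ≤ x, X₁ + X₂ > x | β)`. -/
noncomputable def intermediateTerm (β x : ℝ) : ℝ :=
  ∫ u in Ioc 0 x, ∫ v in Ioc (x - u) x,
    β ^ 2 * u ^ (β - 1) * v ^ (β - 1) * exp (-(u ^ β + v ^ β))

lemma intermediateTerm_nonneg {β : ℝ} (hβ : 0 ≤ β) (x : ℝ) : 0 ≤ intermediateTerm β x := by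
  refine setIntegral_nonneg measurableSet_Ioc fun u hu => ?_
  refine setIntegral_nonneg measurableSet_Ioc fun v hv => ?_
  rw [← weibullPDF_mul_weibullPDF]
  exact mul_nonneg (weibullPDF_nonneg hβ hu.1.le)
    (weibullPDF_nonneg hβ (by linarith [hu.2, hv.1]))

lemma intermediateTerm_eq {β x : ℝ} (hβ : 0 < β) (hx : 0 ≤ x) :
    intermediateTerm β x
      = ∫ u in 0..x, weibullPDF β u * (exp (-(x - u) ^ β) - exp (-x ^ β)) := by
  rw [intervalIntegral.integral_of_le hx]
  refine setIntegral_congr_fun measurableSet_Ioc fun u hu => ?_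
  simp only [← weibullPDF_mul_weibullPDF]
  rw [← integral_weibullPDF hβ (by linarith [hu.2]) (by linarith [hu.1]),
    ← intervalIntegral.integral_const_mul, intervalIntegral.integral_of_le (by linarith [hu.1])]

lemma intermediateTerm_le {β x : ℝ} (hβ₀ : 0 < β) (hβ₁ : β ≤ 1) (hx : 0 < x) :
    intermediateTerm β x ≤ 4 * β / (x / 2) ^ β := by
  have hhalf := exp_neg_rpow_sub_exp_neg_rpow_two_mul_le hβ₀.le hβ₁ (half_pos hx)
  rw [mul_div_cancel₀ x two_ne_zero] at hhalf
  calc intermediateTerm β x ≤ 2 * (exp (-(x / 2) ^ β) - exp (-x ^ β)) := by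
        rw [intermediateTerm_eq hβ₀ hx.le]; exact integral_weibullPDF_mul_sub_le hβ₀ hx.le
    _ ≤ 2 * (2 * β / (x / 2) ^ β) := by gcongr
    _ = 4 * β / (x / 2) ^ β := by ring

lemma integral_Ioi_div_rpow {y : ℝ} (hy : 1 < y) :
    ∫ β in Ioi 0, β / y ^ β = 1 / log y ^ 2 := by
  have hGamma : ∀ β : ℝ, β / y ^ β = β ^ ((2 : ℝ) - 1) * exp (-(log y * β)) := fun β => by
    rw [rpow_def_of_pos (zero_lt_one.trans hy), exp_neg, div_eq_mul_inv]; norm_num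
  simp only [hGamma]
  rw [integral_rpow_mul_exp_neg_mul_Ioi two_pos (log_pos hy), Gamma_two]
  norm_num

lemma integrableOn_Ioi_div_rpow {y : ℝ} (hy : 1 < y) :
    IntegrableOn (fun β => β / y ^ β) (Ioi 0) :=
  Integrable.of_integral_ne_zero (by
    rw [integral_Ioi_div_rpow hy]; have := log_pos hy; positivity)

lemma tendsto_add_div_sq_atTop (c : ℝ) :
    Tendsto (fun L : ℝ => (L + c) / L ^ 2) atTop (nhds 0) := by
  have hinv := tendsto_inv_atTop_zero (𝕜 := ℝ)
  have h := hinv.add ((hinv.pow 2).const_mul c)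
  rw [zero_pow two_ne_zero, mul_zero, add_zero] at h
  refine h.congr' ?_
  filter_upwards [eventually_ne_atTop 0] with L hL
  field_simp

lemma setIntegral_intermediateTerm_le {x : ℝ} (hx : 2 < x) :
    ∫ β in Ioo 0 1, intermediateTerm β x ≤ 4 / log (x / 2) ^ 2 := by
  have hy : 1 < x / 2 := by linarith
  have hint : IntegrableOn (fun β => 4 * (β / (x / 2) ^ β)) (Ioi 0) :=
    (integrableOn_Ioi_div_rpow hy).const_mul 4
  have hbound : ∫ β in Ioo 0 1, intermediateTerm β x ≤ ∫ β in Ioo 0 1, 4 * (β / (x / 2) ^ β) :=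
    integral_mono_of_nonneg
      ((ae_restrict_iff' measurableSet_Ioo).2 (ae_of_all _ fun β hβ =>
        intermediateTerm_nonneg hβ.1.le x))
      (hint.mono_set Ioo_subset_Ioi_self)
      ((ae_restrict_iff' measurableSet_Ioo).2 (ae_of_all _ fun β hβ =>
        (intermediateTerm_le hβ.1 hβ.2.le (by linarith)).trans_eq (mul_div_assoc _ _ _)))
  have hextend : ∫ β in Ioo 0 1, 4 * (β / (x / 2) ^ β) ≤ ∫ β in Ioi 0, 4 * (β / (x / 2) ^ β) :=
    setIntegral_mono_set hint
      ((ae_restrict_iff' measurableSet_Ioi).2 (ae_of_all _ fun β hβ => by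
        have := rpow_pos_of_pos (zero_lt_one.trans hy) β
        have : (0 : ℝ) < β := hβ
        positivity))
      Ioo_subset_Ioi_self.eventuallyLE
  calc ∫ β in Ioo 0 1, intermediateTerm β x
      ≤ ∫ β in Ioi 0, 4 * (β / (x / 2) ^ β) := hbound.trans hextend
    _ = 4 / log (x / 2) ^ 2 := by rw [integral_const_mul, integral_Ioi_div_rpow hy]; ring

/-- For `β ∼ Uniform(0,1)` and, conditionally on `β`, i.i.d. `X₁, X₂`
with conditional density `β u^{β−1} e^{−u^β}` on `(0,∞)`, the probability
`P(X₁ ≤ x, X₂ ≤ x, X₁+X₂ > x)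
  = ∫₀¹ ∫₀ˣ ∫_{x−u}ˣ β² u^{β−1} v^{β−1} e^{−(u^β+v^β)} dv du dβ`
is `o(1/log x)` as `x → ∞`. -/
theorem intermediate_term_negligible_weibull_mixture :
    Tendsto
      (fun x : ℝ => Real.log x *
        ∫ β in Set.Ioo (0 : ℝ) 1, ∫ u in Set.Ioc (0 : ℝ) x, ∫ v in Set.Ioc (x - u) x,
          β ^ 2 * u ^ (β - 1) * v ^ (β - 1) * Real.exp (-(u ^ β + v ^ β)))
      atTop (nhds 0) := by
  change Tendsto (fun x => log x * ∫ β in Ioo 0 1, intermediateTerm β x) atTop (nhds 0)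
  have hlim := ((tendsto_add_div_sq_atTop (log 2)).comp
    (tendsto_log_atTop.comp (tendsto_id.atTop_div_const two_pos))).const_mul 4
  rw [mul_zero] at hlim
  refine squeeze_zero' ?_ ?_ hlim
  · filter_upwards [eventually_ge_atTop 1] with x hx
    exact mul_nonneg (log_nonneg hx)
      (setIntegral_nonneg measurableSet_Ioo fun β hβ => intermediateTerm_nonneg hβ.1.le x)
  · filter_upwards [eventually_gt_atTop 2] with x hx
    calc log x * ∫ β in Ioo 0 1, intermediateTerm β x ≤ log x * (4 / log (x / 2) ^ 2) :=
          mul_le_mul_of_nonneg_left (setIntegral_intermediateTerm_le hx) (log_nonneg (by linarith))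
      _ = 4 * ((log (x / 2) + log 2) / log (x / 2) ^ 2) := by
          rw [← log_mul (by linarith) two_ne_zero, div_mul_cancel₀ x two_ne_zero]
          ring
end

section
/- Let Z₀, Z₁, …, Zₙ be i.i.d. with P(Z > x) = x^{−α}, x ≥ 1, and Y₁, …, Yₙ i.i.d. with P(Y > x) = x^{−β}, x ≥ 1 (α > β > 1), independent of the Z's. Set X_i = Z_i − Y_i Z_{i−1}. Then P(X₁ + ⋯ + Xₙ > x) ≤ P(Z > x) = x^{−α} for all x ≥ 1; in particular P(X₁+⋯+Xₙ > x) is NOT asymptotic to n·P(X₁ > x) ∼ n x^{−α}, so the single-big-jump conclusion fails. -/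
open MeasureTheory Filter ProbabilityTheory Topology

/-!
Since `Yᵢ ≥ 1` and `Zᵢ ≥ 0`, each increment `Zᵢ - YᵢZᵢ₋₁` is at most `Zᵢ - Zᵢ₋₁`, so the sum
telescopes to at most `Zₙ - Z₀ ≤ Zₙ`. Hence `P(X₁ + ⋯ + Xₙ > x) ≤ P(Zₙ > x) = x^{-α}`, and the
ratio to `n x^{-α}` stays below `1/n < 1`.
-/

theorem sum_range_sub_mul_le_sub {z y : ℕ → ℝ} (hz : ∀ i, 0 ≤ z i) (hy : ∀ i, 1 ≤ y i) (m : ℕ) :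
    ∑ i ∈ Finset.range m, (z (i + 1) - y (i + 1) * z i) ≤ z m - z 0 := by
  rw [← Finset.sum_range_sub z m]
  refine Finset.sum_le_sum fun i _ => ?_
  have : z i ≤ y (i + 1) * z i := le_mul_of_one_le_left (hz i) (hy (i + 1))
  linarith

theorem toReal_measure_lt_le_of_le {Ω : Type*} [MeasurableSpace Ω] (μ : Measure Ω)
    {f g : Ω → ℝ} (hfg : ∀ ω, f ω ≤ g ω) {x : ℝ} (hg : μ {ω | x < g ω} ≠ ⊤) :
    (μ {ω | x < f ω}).toReal ≤ (μ {ω | x < g ω}).toReal :=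
  ENNReal.toReal_mono hg <| measure_mono fun ω (hω : x < f ω) => hω.trans_le (hfg ω)

theorem not_tendsto_div_const_mul_nhds_one {ι : Type*} {l : Filter ι} [l.NeBot]
    {F G : ι → ℝ} {c : ℝ} (hc : 1 < c) (hG : ∀ᶠ x in l, 0 < G x)
    (hFG : ∀ᶠ x in l, F x ≤ G x) :
    ¬ Tendsto (fun x => F x / (c * G x)) l (𝓝 1) := by
  intro hT
  have hle : 1 ≤ c⁻¹ := le_of_tendsto hT <| by
    filter_upwards [hG, hFG] with x hGx hFx
    rw [div_le_iff₀ (by positivity), inv_mul_cancel_left₀ (by positivity)]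
    exact hFx
  linarith [inv_lt_one_of_one_lt₀ hc]

theorem example6_single_big_jump_fails_general
    {Ω : Type*} [MeasurableSpace Ω] (μ : Measure Ω)
    (α : ℝ)
    (Z Y : ℕ → Ω → ℝ)
    (hZ_ge : ∀ i ω, 1 ≤ Z i ω) (hY_ge : ∀ i ω, 1 ≤ Y i ω)
    (hZ_tail : ∀ i, ∀ x : ℝ, 1 ≤ x → (μ {ω | x < Z i ω}).toReal = x ^ (-α))
    (n : ℕ) :
    (∀ x : ℝ, 1 ≤ x →
      (μ {ω | x < ∑ i ∈ Finset.range n,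
          (Z (i + 1) ω - Y (i + 1) ω * Z i ω)}).toReal ≤ x ^ (-α)) ∧
    (2 ≤ n → ¬ Tendsto
      (fun x : ℝ => (μ {ω | x < ∑ i ∈ Finset.range n,
          (Z (i + 1) ω - Y (i + 1) ω * Z i ω)}).toReal / ((n : ℝ) * x ^ (-α)))
      atTop (nhds 1)) := by
  have hsum_le : ∀ ω, ∑ i ∈ Finset.range n, (Z (i + 1) ω - Y (i + 1) ω * Z i ω) ≤ Z n ω :=
    fun ω => by
      linarith [sum_range_sub_mul_le_sub (fun i => zero_le_one.trans (hZ_ge i ω))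
        (fun i => hY_ge i ω) n, hZ_ge 0 ω]
  have htail : ∀ x : ℝ, 1 ≤ x →
      (μ {ω | x < ∑ i ∈ Finset.range n,
          (Z (i + 1) ω - Y (i + 1) ω * Z i ω)}).toReal ≤ x ^ (-α) := by
    intro x hx
    have hfin : μ {ω | x < Z n ω} ≠ ⊤ := by
      refine (ENNReal.toReal_pos_iff.mp ?_).2.ne
      rw [hZ_tail n x hx]
      exact Real.rpow_pos_of_pos (by linarith) _
    exact hZ_tail n x hx ▸ toReal_measure_lt_le_of_le μ hsum_le hfin
  refine ⟨htail, fun hn => not_tendsto_div_const_mul_nhds_one (by exact_mod_cast hn) ?_ ?_⟩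
  · filter_upwards [eventually_gt_atTop 0] with x hx using Real.rpow_pos_of_pos hx _
  · filter_upwards [eventually_ge_atTop 1] with x hx using htail x hx

/-- With `Z₀,…,Zₙ` i.i.d. Pareto(α) and `Y₁,…,Yₙ` i.i.d. Pareto(β)
(`α > β > 1`), all mutually independent, and `Xᵢ = Zᵢ − YᵢZ_{i−1}`, one has
`P(X₁+⋯+Xₙ > x) ≤ P(Z > x) = x^{−α}` for `x ≥ 1`; in particular, for `n ≥ 2`,
`P(X₁+⋯+Xₙ > x)` is not asymptotic to `n x^{−α}`, so the single-big-jump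
conclusion fails. -/
theorem example6_single_big_jump_fails
    {Ω : Type*} [MeasurableSpace Ω] (μ : Measure Ω) [IsProbabilityMeasure μ]
    (α β : ℝ) (hαβ : β < α) (hβ : 1 < β)
    (Z Y : ℕ → Ω → ℝ)
    (hZ_meas : ∀ i, Measurable (Z i)) (hY_meas : ∀ i, Measurable (Y i))
    (hZ_ge : ∀ i ω, 1 ≤ Z i ω) (hY_ge : ∀ i ω, 1 ≤ Y i ω)
    (hZ_tail : ∀ i, ∀ x : ℝ, 1 ≤ x → (μ {ω | x < Z i ω}).toReal = x ^ (-α))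
    (hY_tail : ∀ i, ∀ x : ℝ, 1 ≤ x → (μ {ω | x < Y i ω}).toReal = x ^ (-β))
    (hindep : iIndepFun
      (Sum.elim Z Y) μ)
    (n : ℕ) (hn : 1 ≤ n) :
    (∀ x : ℝ, 1 ≤ x →
      (μ {ω | x < ∑ i ∈ Finset.range n,
          (Z (i + 1) ω - Y (i + 1) ω * Z i ω)}).toReal ≤ x ^ (-α)) ∧
    (2 ≤ n → ¬ Tendsto
      (fun x : ℝ => (μ {ω | x < ∑ i ∈ Finset.range n,
          (Z (i + 1) ω - Y (i + 1) ω * Z i ω)}).toReal / ((n : ℝ) * x ^ (-α)))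
      atTop (nhds 1)) :=
  example6_single_big_jump_fails_general μ α Z Y hZ_ge hY_ge hZ_tail n
end
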